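/- arXiv:2502.14306 — 5 statements merged into one kernel-verified Lean document; each statement's English description precedes it below -/
import Mathlib

section
/- Let ≤ be a linear order on S with no maximum and no minimum element. Then ≤ is homogeneous if and only if for all a < b and a' < b' in S, the open intervals (a,b) and (a',b') are order-isomorphic. -/
/-- A linear order is homogeneous if all open intervals between pairs `a < b` are pairwise
order-isomorphic, and similarly for initial and final open segments. -/
def HomogeneousOrder (S : Type*) [LinearOrder S] : Prop :=
  ∀ a b a' b' : S, a < b → a' < b' →
    Nonempty (Set.Ioo a b ≃o Set.Ioo a' b') ∧
    Nonempty (Set.Iio a ≃o Set.Iio a') ∧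
    Nonempty (Set.Ioi a ≃o Set.Ioi a')

noncomputable def glueIio {S : Type*} [LinearOrder S] {a a' b : S} (hba : b < a) (hba' : b < a')
    (g : Set.Ioo b a ≃o Set.Ioo b a') : Set.Iio a ≃o Set.Iio a' := by
  refine StrictMono.orderIsoOfSurjective
    (fun x => if h : b < x.1 then ⟨(g ⟨x.1, h, x.2⟩).1, (g ⟨x.1, h, x.2⟩).2.2⟩
              else ⟨x.1, lt_of_le_of_lt (not_lt.mp h) hba'⟩) ?_ ?_
  · intro x y hxy
    dsimp only
    split_ifs with hx hy hy
    · exact g.strictMono (show (⟨x.1, hx, x.2⟩ : Set.Ioo b a) < ⟨y.1, hy, y.2⟩ from hxy)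
    · exact absurd (lt_of_lt_of_le hx (le_of_lt (lt_of_lt_of_le hxy (not_lt.mp hy)))) (lt_irrefl b)
    · exact Subtype.mk_lt_mk.mpr (lt_of_le_of_lt (not_lt.mp hx) (g ⟨y.1, hy, y.2⟩).2.1)
    · exact Subtype.mk_lt_mk.mpr hxy
  · rintro ⟨y, hy⟩
    by_cases hby : b < y
    · refine ⟨⟨(g.symm ⟨y, hby, hy⟩).1, (g.symm ⟨y, hby, hy⟩).2.2⟩, ?_⟩
      have h1 : b < (g.symm ⟨y, hby, hy⟩).1 := (g.symm ⟨y, hby, hy⟩).2.1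
      simp only [h1, dif_pos]
      apply Subtype.ext
      have : g ⟨(g.symm ⟨y, hby, hy⟩).1, h1, (g.symm ⟨y, hby, hy⟩).2.2⟩
          = g (g.symm ⟨y, hby, hy⟩) := by congr
      simp [this]
    · refine ⟨⟨y, lt_of_le_of_lt (not_lt.mp hby) hba⟩, ?_⟩
      simp [hby]

noncomputable def glueIoi {S : Type*} [LinearOrder S] {a a' b : S} (hba : a < b) (hba' : a' < b)
    (g : Set.Ioo a b ≃o Set.Ioo a' b) : Set.Ioi a ≃o Set.Ioi a' := by
  refine StrictMono.orderIsoOfSurjective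
    (fun x => if h : x.1 < b then ⟨(g ⟨x.1, x.2, h⟩).1, (g ⟨x.1, x.2, h⟩).2.1⟩
              else ⟨x.1, lt_of_lt_of_le hba' (not_lt.mp h)⟩) ?_ ?_
  · intro x y hxy
    dsimp only
    split_ifs with hx hy hy
    · exact g.strictMono (show (⟨x.1, x.2, hx⟩ : Set.Ioo a b) < ⟨y.1, y.2, hy⟩ from hxy)
    · exact Subtype.mk_lt_mk.mpr (lt_of_lt_of_le (g ⟨x.1, x.2, hx⟩).2.2 (not_lt.mp hy))
    · exact absurd (show x.1 < y.1 from hxy) (not_lt.mpr ((le_of_lt hy).trans (not_lt.mp hx)))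
    · exact Subtype.mk_lt_mk.mpr hxy
  · rintro ⟨y, hy⟩
    by_cases hby : y < b
    · refine ⟨⟨(g.symm ⟨y, hy, hby⟩).1, (g.symm ⟨y, hy, hby⟩).2.1⟩, ?_⟩
      have h1 : (g.symm ⟨y, hy, hby⟩).1 < b := (g.symm ⟨y, hy, hby⟩).2.2
      simp only [h1, dif_pos]
      apply Subtype.ext
      have : g ⟨(g.symm ⟨y, hy, hby⟩).1, (g.symm ⟨y, hy, hby⟩).2.1, h1⟩
          = g (g.symm ⟨y, hy, hby⟩) := by congr
      simp [this]
    · refine ⟨⟨y, lt_of_lt_of_le hba (not_lt.mp hby)⟩, ?_⟩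
      simp [hby]

theorem stmt_1 (S : Type*) [LinearOrder S] [NoMinOrder S] [NoMaxOrder S] :
    HomogeneousOrder S ↔
      ∀ a b a' b' : S, a < b → a' < b' → Nonempty (Set.Ioo a b ≃o Set.Ioo a' b') := by
  constructor
  · intro h a b a' b' hab hab'
    exact (h a b a' b' hab hab').1
  · intro h a b a' b' hab hab'
    refine ⟨h a b a' b' hab hab', ?_, ?_⟩
    · obtain ⟨c, hc⟩ := exists_lt (min a a')
      have hca : c < a := hc.trans_le (min_le_left _ _)
      have hca' : c < a' := hc.trans_le (min_le_right _ _)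
      obtain ⟨g⟩ := h c a c a' hca hca'
      exact ⟨glueIio hca hca' g⟩
    · obtain ⟨c, hc⟩ := exists_gt (max a a')
      have hca : a < c := lt_of_le_of_lt (le_max_left _ _) hc
      have hca' : a' < c := lt_of_le_of_lt (le_max_right _ _) hc
      obtain ⟨g⟩ := h a c a' c hca hca'
      exact ⟨glueIoi hca hca' g⟩
end

section
/- A linear order ≤ on S is globally homogeneous if and only if for every a < b in S, the open interval (a,b) is order-isomorphic to (S, ≤). -/
/-!
An isomorphism `f : (b, c) ≃o S` sends some `m ∈ (b, c)` to `a`, and so carries `(b, m)` onto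
`(-∞, a)` and `(m, c)` onto `(a, ∞)`. Both are bounded open intervals, hence isomorphic to `S`.
-/

open Set

/-- A linear order is globally homogeneous if every open interval of the form `(-∞,a)`,
`(a,b)` with `a < b`, or `(a,∞)` is order-isomorphic to the whole order. -/
def GloballyHomogeneousOrder (S : Type*) [LinearOrder S] : Prop :=
  ∀ a b : S,
    Nonempty (Set.Iio a ≃o S) ∧ Nonempty (Set.Ioi a ≃o S) ∧
    (a < b → Nonempty (Set.Ioo a b ≃o S))

namespace OrderIso

variable {α β : Type*} [Preorder α] [Preorder β]

protected def Iio (e : α ≃o β) (x : α) : Iio x ≃o Iio (e x) where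
  toEquiv := e.toEquiv.subtypeEquiv fun _ ↦ e.lt_iff_lt.symm
  map_rel_iff' := e.le_iff_le

protected def Ioi (e : α ≃o β) (x : α) : Ioi x ≃o Ioi (e x) where
  toEquiv := e.toEquiv.subtypeEquiv fun _ ↦ e.lt_iff_lt.symm
  map_rel_iff' := e.le_iff_le

end OrderIso

section Preorder

variable {α β : Type*} [Preorder α] {b c : α}

def iooOrderIsoIio (m : Ioo b c) : Ioo b (m : α) ≃o Iio m where
  toFun x := ⟨⟨x, x.2.1, x.2.2.trans m.2.2⟩, x.2.2⟩
  invFun y := ⟨y.1, y.1.2.1, y.2⟩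
  map_rel_iff' := Iff.rfl

def iooOrderIsoIoi (m : Ioo b c) : Ioo (m : α) c ≃o Ioi m where
  toFun x := ⟨⟨x, m.2.1.trans x.2.1, x.2.2⟩, x.2.1⟩
  invFun y := ⟨y.1, y.2, y.1.2.2⟩
  map_rel_iff' := Iff.rfl

variable [Preorder β]

def OrderIso.iioOrderIsoIoo (f : Ioo b c ≃o β) (a : β) : Iio a ≃o Ioo b (f.symm a : α) :=
  (f.symm.Iio a).trans (iooOrderIsoIio _).symm

def OrderIso.ioiOrderIsoIoo (f : Ioo b c ≃o β) (a : β) : Ioi a ≃o Ioo (f.symm a : α) c :=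
  (f.symm.Ioi a).trans (iooOrderIsoIoi _).symm

end Preorder

theorem stmt_2 (S : Type*) [LinearOrder S] [Infinite S] :
    GloballyHomogeneousOrder S ↔ ∀ a b : S, a < b → Nonempty (Set.Ioo a b ≃o S) := by
  refine ⟨fun h a b hab ↦ (h a b).2.2 hab, fun h a b ↦ ?_⟩
  obtain ⟨c, d, hcd⟩ := exists_pair_lt S
  obtain ⟨f⟩ := h c d hcd
  have hm := (f.symm a).2
  obtain ⟨below⟩ := h _ _ hm.1
  obtain ⟨above⟩ := h _ _ hm.2
  exact ⟨⟨(f.iioOrderIsoIoo a).trans below⟩, ⟨(f.ioiOrderIsoIoo a).trans above⟩, h a b⟩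
end

section
/- Let S = ω₁ × ℚ with the lexicographic order, where ω₁ is the first uncountable ordinal. Then for every a < b in S, the open interval (a,b) is order-isomorphic to (ℚ, ≤); in particular, the lexicographic order on S is homogeneous but not globally homogeneous. -/
/-- `ω₁ × ℚ` with the lexicographic order, `ω₁` being (the set of ordinals below) the first
uncountable ordinal. -/
abbrev OmegaOneTimesQ : Type 1 :=
  Lex ({o : Ordinal // o < (Cardinal.aleph 1).ord} × ℚ)

/-!
Every element of `ω₁ ×ₗ ℚ` has only countably many predecessors, so bounded open intervals and
initial segments are countable dense linear orders without endpoints, hence copies of `ℚ` by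
Cantor's theorem; since the whole order is uncountable, it is not globally homogeneous.
A final segment `(⟨α, q⟩, ∞)` splits as `(q, ∞) ⊕ₗ ({β | α < β} ×ₗ ℚ)`, and because `ω₁` is
additively principal, `β ↦ α + 1 + β` identifies `ω₁` with `{β | α < β}`; so every final segment
is isomorphic to `ℚ ⊕ₗ (ω₁ ×ₗ ℚ)`.
-/

open Set Cardinal Ordinal

theorem Ordinal.countable_Iio_iff {γ : Ordinal} : (Iio γ).Countable ↔ γ < (aleph 1).ord := by
  rw [← le_aleph0_iff_set_countable, Cardinal.mk_Iio_ordinal, lift_le_aleph0, lt_ord,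
    lt_aleph_one_iff]

theorem Ordinal.countable_Iic {γ : Ordinal} (hγ : γ < (aleph 1).ord) : (Iic γ).Countable := by
  rw [← Iio_insert]
  exact (countable_Iio_iff.2 hγ).insert γ

theorem Prod.Lex.countable_Iio {α β : Type*} [LinearOrder α] [LinearOrder β] [Countable β]
    (x : α ×ₗ β) (hx : (Iic (ofLex x).1).Countable) : (Iio x).Countable := by
  refine ((hx.prod countable_univ).image toLex).mono fun y hy => ?_
  exact ⟨ofLex y, ⟨Prod.Lex.monotone_fst _ _ hy.le, mem_univ _⟩, rfl⟩

theorem Sum.Lex.strictMono_elim {α β γ : Type*} [Preorder α] [Preorder β] [Preorder γ]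
    {f : α → γ} {g : β → γ} (hf : StrictMono f) (hg : StrictMono g) (hfg : ∀ a b, f a < g b) :
    StrictMono (Sum.elim f g ∘ ofLex) := by
  rintro (a | b) (a' | b') h
  · exact hf (Sum.Lex.inl_lt_inl_iff.1 h)
  · exact hfg a b'
  · exact absurd h Sum.Lex.not_inr_lt_inl
  · exact hg (Sum.Lex.inr_lt_inr_iff.1 h)

theorem homogeneousOrder_of_forall_orderIso {S T U V : Type*} [LinearOrder S] [LE T] [LE U]
    [LE V] (hIoo : ∀ a b : S, a < b → Nonempty (Ioo a b ≃o T))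
    (hIio : ∀ a : S, Nonempty (Iio a ≃o U)) (hIoi : ∀ a : S, Nonempty (Ioi a ≃o V)) :
    HomogeneousOrder S := by
  intro a b a' b' hab hab'
  obtain ⟨e₁⟩ := hIoo a b hab
  obtain ⟨e₁'⟩ := hIoo a' b' hab'
  obtain ⟨e₂⟩ := hIio a
  obtain ⟨e₂'⟩ := hIio a'
  obtain ⟨e₃⟩ := hIoi a
  obtain ⟨e₃'⟩ := hIoi a'
  exact ⟨⟨e₁.trans e₁'.symm⟩, ⟨e₂.trans e₂'.symm⟩, ⟨e₃.trans e₃'.symm⟩⟩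

theorem not_globallyHomogeneousOrder_of_countable_Iio {S : Type*} [LinearOrder S] [Uncountable S]
    {a : S} (ha : (Iio a).Countable) : ¬ GloballyHomogeneousOrder S := by
  intro hS
  obtain ⟨⟨e⟩, -, -⟩ := hS a a
  exact not_countable (e.toEquiv.countable_iff.1 ha.to_subtype)

abbrev OrdinalTimesQ (o : Ordinal) : Type _ := Lex ({β : Ordinal // β < o} × ℚ)

namespace OrdinalTimesQ

variable {o : Ordinal}

theorem countable_Iio (ho : o ≤ (aleph 1).ord) (x : OrdinalTimesQ o) : (Iio x).Countable :=
  Prod.Lex.countable_Iio x <|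
    (countable_Iic ((ofLex x).1.2.trans_le ho)).preimage Subtype.val_injective

theorem uncountable (ho : (aleph 1).ord ≤ o) : Uncountable (OrdinalTimesQ o) :=
  have : Uncountable {β : Ordinal // β < o} :=
    ⟨fun h => (countable_Iio_iff.1 (countable_coe_iff.1 h)).not_ge ho⟩
  inferInstanceAs (Uncountable (_ × ℚ))

theorem nonempty_orderIso_Ioo (ho : o ≤ (aleph 1).ord) {a b : OrdinalTimesQ o} (hab : a < b) :
    Nonempty (Ioo a b ≃o ℚ) :=
  have : Countable (Ioo a b) := ((countable_Iio ho b).mono Ioo_subset_Iio_self).to_subtype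
  have : Nonempty (Ioo a b) := (nonempty_Ioo.2 hab).to_subtype
  Order.iso_of_countable_dense _ _

theorem nonempty_orderIso_Iio (ho : o ≤ (aleph 1).ord) (a : OrdinalTimesQ o) :
    Nonempty (Iio a ≃o ℚ) :=
  have : Countable (Iio a) := (countable_Iio ho a).to_subtype
  Order.iso_of_countable_dense _ _

theorem nonempty_orderIso_Ioi (ho : IsPrincipal (· + ·) o) (ho₁ : 1 < o) (α : {β // β < o})
    (q : ℚ) : Nonempty (Ioi (toLex (α, q)) ≃o ℚ ⊕ₗ OrdinalTimesQ o) := by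
  obtain ⟨e⟩ : Nonempty (ℚ ≃o Ioi q) := Order.iso_of_countable_dense _ _
  let shift (β : {β // β < o}) : {β // β < o} := ⟨α.1 + 1 + β.1, ho (ho α.2 ho₁) β.2⟩
  have lt_shift (β) : α < shift β :=
    show α.1 < α.1 + 1 + β.1 from (Order.lt_add_one_iff.2 le_rfl).trans_le le_self_add
  let f : ℚ ⊕ₗ OrdinalTimesQ o → OrdinalTimesQ o :=
    Sum.elim (fun r => toLex (α, (e r : ℚ)))
      (fun p => toLex (shift (ofLex p).1, (ofLex p).2)) ∘ ofLex
  have hf : StrictMono f := by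
    refine Sum.Lex.strictMono_elim ?_ ?_ fun _ _ => Prod.Lex.toLex_lt_toLex.2 (.inl (lt_shift _))
    · exact fun r s h => Prod.Lex.toLex_lt_toLex.2 (.inr ⟨rfl, e.strictMono h⟩)
    · intro p p' h
      rcases Prod.Lex.lt_iff.1 h with h | ⟨h₁, h₂⟩
      · exact Prod.Lex.toLex_lt_toLex.2
          (.inl (add_lt_add_right (show (ofLex p).1.1 < (ofLex p').1.1 from h) _))
      · exact Prod.Lex.toLex_lt_toLex.2 (.inr ⟨by rw [h₁], h₂⟩)
  have hrange : range f = Ioi (toLex (α, q)) := by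
    ext y
    constructor
    · rintro ⟨r | p, rfl⟩
      · exact Prod.Lex.toLex_lt_toLex.2 (.inr ⟨rfl, (e r).2⟩)
      · exact Prod.Lex.toLex_lt_toLex.2 (.inl (lt_shift _))
    · intro hy
      rcases Prod.Lex.lt_iff.1 hy with h | ⟨h₁, h₂⟩
      · let γ : {β // β < o} :=
          ⟨(ofLex y).1.1 - (α.1 + 1), (sub_le_self _ _).trans_lt (ofLex y).1.2⟩
        refine ⟨toLex (.inr (toLex (γ, (ofLex y).2))), congrArg toLex (Prod.ext ?_ rfl)⟩
        exact Subtype.ext (Ordinal.add_sub_cancel_of_le (Order.add_one_le_of_lt h))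
      · refine ⟨toLex (.inl (e.symm ⟨_, h₂⟩)), congrArg toLex (Prod.ext h₁ ?_)⟩
        exact congrArg Subtype.val (e.apply_symm_apply _)
  exact ⟨((hf.orderIso f).trans (OrderIso.setCongr _ _ hrange)).symm⟩

end OrdinalTimesQ

theorem stmt_5 :
    (∀ a b : OmegaOneTimesQ, a < b → Nonempty (Set.Ioo a b ≃o ℚ)) ∧
    HomogeneousOrder OmegaOneTimesQ ∧ ¬ GloballyHomogeneousOrder OmegaOneTimesQ := by
  have hIoo (a b : OmegaOneTimesQ) (hab : a < b) : Nonempty (Ioo a b ≃o ℚ) :=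
    OrdinalTimesQ.nonempty_orderIso_Ioo le_rfl hab
  have hIoi (a : OmegaOneTimesQ) : Nonempty (Ioi a ≃o ℚ ⊕ₗ OmegaOneTimesQ) :=
    OrdinalTimesQ.nonempty_orderIso_Ioi (isPrincipal_add_ord (aleph0_le_aleph 1))
      (by rw [lt_ord, card_one]; exact one_lt_aleph0.trans_le (aleph0_le_aleph 1))
      (ofLex a).1 (ofLex a).2
  have : Uncountable OmegaOneTimesQ := OrdinalTimesQ.uncountable le_rfl
  exact ⟨hIoo, homogeneousOrder_of_forall_orderIso hIoo
    (OrdinalTimesQ.nonempty_orderIso_Iio le_rfl) hIoi,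
    not_globallyHomogeneousOrder_of_countable_Iio
      (OrdinalTimesQ.countable_Iio le_rfl (Classical.arbitrary _))⟩
end

section
/- Let G be a group acting on a set S, and suppose the action is highly transitive, i.e., for every n ∈ ℕ and any two n-tuples of pairwise distinct elements (s₁,...,sₙ) and (t₁,...,tₙ) in S there is g ∈ G with g·sᵢ = tᵢ for all i. Then the map sending each finite subset T of S to its pointwise stabilizer H_T = {g ∈ G | g·t = t for all t ∈ T} is injective on finite subsets of the infinite set S. -/
/-- An action is highly transitive if any tuple of pairwise distinct elements can be mapped
to any other tuple of pairwise distinct elements of the same length by a group element. -/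
def HighlyTransitive (G S : Type*) [Group G] [MulAction G S] : Prop :=
  ∀ (n : ℕ) (s t : Fin n → S), Function.Injective s → Function.Injective t →
    ∃ g : G, ∀ i, g • s i = t i

theorem stmt_9 {G S : Type*} [Group G] [MulAction G S] [Infinite S]
    (h : HighlyTransitive G S) :
    Function.Injective fun T : Finset S => {g : G | ∀ t ∈ T, g • t = t} := by
  classical
  have key : ∀ (T : Finset S) (x : S), x ∉ T →
      ∃ g : G, (∀ t ∈ T, g • t = t) ∧ g • x ≠ x := by
    intro T x hx
    obtain ⟨y, hy⟩ := Infinite.exists_notMem_finset (insert x T)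
    set e := T.equivFin with he
    set b : Fin T.card → S := fun i => (e.symm i : S) with hb
    have hbinj : Function.Injective b :=
      fun i j hij => e.symm.injective (Subtype.coe_injective hij)
    have hbT : ∀ i, b i ∈ T := fun i => (e.symm i).2
    have snoc_inj : ∀ z : S, z ∉ T → Function.Injective (Fin.snoc b z) := by
      intro z hz i j hij
      induction i using Fin.lastCases with
      | last =>
        induction j using Fin.lastCases with
        | last => rfl
        | cast j =>
          simp only [Fin.snoc_last, Fin.snoc_castSucc] at hij
          exact absurd (hij ▸ hbT j) hz
      | cast i =>
        induction j using Fin.lastCases with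
        | last =>
          simp only [Fin.snoc_last, Fin.snoc_castSucc] at hij
          exact absurd (hij.symm ▸ hbT i) hz
        | cast j =>
          simp only [Fin.snoc_castSucc] at hij
          exact congrArg Fin.castSucc (hbinj hij)
    have hyT : y ∉ T := fun hmem => hy (Finset.mem_insert_of_mem hmem)
    obtain ⟨g, hg⟩ := h (T.card + 1) (Fin.snoc b x) (Fin.snoc b y)
      (snoc_inj x hx) (snoc_inj y hyT)
    refine ⟨g, ?_, ?_⟩
    · intro t ht
      have := hg (Fin.castSucc (e ⟨t, ht⟩))
      simpa [b] using this
    · have := hg (Fin.last _)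
      simp only [Fin.snoc_last] at this
      rw [this]
      exact fun hxy => hy (hxy ▸ Finset.mem_insert_self x T)
  intro T₁ T₂ hT
  simp only at hT
  have sub : ∀ T₁ T₂ : Finset S,
      {g : G | ∀ t ∈ T₁, g • t = t} = {g : G | ∀ t ∈ T₂, g • t = t} → T₁ ⊆ T₂ := by
    intro A B hAB x hxA
    by_contra hxB
    obtain ⟨g, hgB, hgx⟩ := key B x hxB
    have : g ∈ {g : G | ∀ t ∈ A, g • t = t} := hAB ▸ hgB
    exact hgx (this x hxA)
  exact le_antisymm (sub T₁ T₂ hT) (sub T₂ T₁ hT.symm)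
end

section
/- Assuming the axiom of choice, every infinite set admits a globally homogeneous linear order. -/
open Set

universe u

theorem OrderIso.nonempty_orderIso_of_image_eq {α β : Type*} [LinearOrder α] [Preorder β]
    (φ : α ≃o β) {s : Set α} {t : Set β} (h : φ '' s = t) : Nonempty (s ≃o t) :=
  ⟨((φ.strictMono.strictMonoOn s).orderIso φ s).trans (OrderIso.setCongr _ _ h)⟩

theorem OrderIso.globallyHomogeneousOrder {α β : Type*} [LinearOrder α] [LinearOrder β]
    (φ : α ≃o β) (h : GloballyHomogeneousOrder β) : GloballyHomogeneousOrder α := by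
  intro a b
  obtain ⟨⟨e₁⟩, ⟨e₂⟩, h₃⟩ := h (φ a) (φ b)
  refine ⟨?_, ?_, fun hab => ?_⟩
  · exact (φ.nonempty_orderIso_of_image_eq (φ.image_Iio a)).map (·.trans (e₁.trans φ.symm))
  · exact (φ.nonempty_orderIso_of_image_eq (φ.image_Ioi a)).map (·.trans (e₂.trans φ.symm))
  · obtain ⟨e₃⟩ := h₃ (φ.lt_iff_lt.2 hab)
    exact (φ.nonempty_orderIso_of_image_eq (φ.image_Ioo a b)).map (·.trans (e₃.trans φ.symm))

section OrderedField

variable {K : Type*} [Field K] [LinearOrder K] [IsStrictOrderedRing K]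

def ioiOrderIsoIoiZero (a : K) : Ioi a ≃o Ioi (0 : K) :=
  StrictMono.orderIsoOfRightInverse (fun x => ⟨x - a, sub_pos.2 x.2⟩)
    (fun _ _ h => sub_lt_sub_right (α := K) h a)
    (fun y => ⟨y + a, lt_add_of_pos_left a y.2⟩)
    (fun y => Subtype.ext (add_sub_cancel_right (y : K) a))

def iioOrderIsoIoiZero (a : K) : Iio a ≃o Ioi (0 : K) :=
  StrictMono.orderIsoOfRightInverse (fun x => ⟨(a - x)⁻¹, inv_pos.2 (sub_pos.2 x.2)⟩)
    (fun x y h => by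
      change (a - x)⁻¹ < (a - y)⁻¹
      rw [inv_lt_inv₀ (sub_pos.2 x.2) (sub_pos.2 y.2)]
      exact sub_lt_sub_left (show (x : K) < y from h) a)
    (fun y => ⟨a - (y : K)⁻¹, sub_lt_self a (inv_pos.2 y.2)⟩)
    (fun y => Subtype.ext (by simp))

def iooOrderIsoIoiZero {a b : K} (hab : a < b) : Ioo a b ≃o Ioi (0 : K) :=
  StrictMono.orderIsoOfRightInverse
    (fun x => ⟨(x - a) / (b - x), div_pos (sub_pos.2 x.2.1) (sub_pos.2 x.2.2)⟩)
    (fun x y h => by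
      change (x - a) / (b - x) < (y - a) / (b - y)
      rw [div_lt_div_iff₀ (sub_pos.2 x.2.2) (sub_pos.2 y.2.2)]
      nlinarith [sub_pos.2 hab, show (x : K) < y from h])
    (fun y => ⟨(a + b * y) / (1 + y), by
      have hy : (0 : K) < y := y.2
      constructor
      · rw [lt_div_iff₀ (by linarith)]; nlinarith
      · rw [div_lt_iff₀ (by linarith)]; nlinarith⟩)
    (fun y => Subtype.ext (by
      have hy₁ : 1 + (y : K) ≠ 0 := (add_pos one_pos y.2).ne'
      change ((a + b * y) / (1 + y) - a) / (b - (a + b * y) / (1 + y)) = y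
      rw [div_sub' hy₁, sub_div' hy₁, div_div_div_cancel_right₀ hy₁, div_eq_iff ?_]
      · ring
      · rw [show b * (1 + y) - (a + b * y) = b - a by ring]
        exact (sub_pos.2 hab).ne'))

variable (K) in
theorem globallyHomogeneousOrder_of_isStrictOrderedRing : GloballyHomogeneousOrder K := by
  let e : Ioi (0 : K) ≃o K :=
    (iooOrderIsoIoiZero (by norm_num : (-1 : K) < 1)).symm.trans (orderIsoIooNegOneOne K).symm
  exact fun a b =>
    ⟨⟨(iioOrderIsoIoiZero a).trans e⟩, ⟨(ioiOrderIsoIoiZero a).trans e⟩,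
      fun hab => ⟨(iooOrderIsoIoiZero hab).trans e⟩⟩

end OrderedField

noncomputable instance HahnSeries.instFieldLex (Γ R : Type*) [AddCommGroup Γ] [LinearOrder Γ]
    [IsOrderedAddMonoid Γ] [Field R] : Field (Lex (HahnSeries Γ R)) :=
  inferInstanceAs (Field (HahnSeries Γ R))

theorem exists_isStrictOrderedRing_equiv (S : Type u) [Infinite S] :
    ∃ (K : Type u) (_ : Field K) (_ : LinearOrder K) (_ : IsStrictOrderedRing K),
      Nonempty (S ≃ K) := by
  let _ : LinearOrder S := IsWellOrder.linearOrder WellOrderingRel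
  let monomial : S → Lex (HahnSeries (Lex (S →₀ ℤ)) ℚ) :=
    fun s => toLex (HahnSeries.single (toLex (Finsupp.single s 1)) 1)
  have monomial_injective : Function.Injective monomial := fun s t h => by
    have h_order := congrArg (fun x => (ofLex x).order) h
    simp only [monomial, ofLex_toLex, HahnSeries.order_single one_ne_zero] at h_order
    exact (Finsupp.single_left_inj one_ne_zero).1 (toLex.injective h_order)
  have : Infinite (range monomial) := (infinite_range_of_injective monomial_injective).to_subtype
  refine ⟨Subfield.closure (range monomial), inferInstance, inferInstance, inferInstance,
    Cardinal.eq.1 ?_⟩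
  rw [Subfield.cardinalMk_closure, Cardinal.mk_range_eq monomial monomial_injective]

theorem stmt_15 (S : Type*) [Infinite S] :
    ∃ li : LinearOrder S, @GloballyHomogeneousOrder S li := by
  obtain ⟨K, _, _, _, ⟨e⟩⟩ := exists_isStrictOrderedRing_equiv S
  let _ : LinearOrder S := LinearOrder.lift' e e.injective
  exact ⟨_, OrderIso.globallyHomogeneousOrder { e with map_rel_iff' := Iff.rfl }
    (globallyHomogeneousOrder_of_isStrictOrderedRing K)⟩
end
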